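/- Let s₁, s₂, t₁, t₂ ∈ Z_k with t₁ ≠ 0, t₂ ≠ 0, t₁ ≠ t₂. Suppose s₁ - s₂ ≢ t₁, s₂ - s₁ ≢ t₂, and s₁ - s₂ ≢ t₁ - t₂ (all mod k). Then no vertex of Y(s₁,t₁) is adjacent in H(n,k) to any vertex of Y(s₂,t₂). -/
import Mathlib


/-- Two vertices of the Hamming graph `H(n,k)` are adjacent iff they differ
in exactly one coordinate. -/
def HAdj {n k : ℕ} (v w : Fin n → ZMod k) : Prop := ∃! i, v i ≠ w i

/-- `X n k s` is the set of vertices whose coordinate sum is `s` in `ZMod k`. -/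
def X (n k : ℕ) (s : ZMod k) : Set (Fin n → ZMod k) := {v | ∑ i, v i = s}

/-- `ellN v` is the (0-based) largest index at which `v` is nonzero (0 if `v = 0`). -/
def ellN {n k : ℕ} (v : Fin n → ZMod k) : ℕ :=
  (Finset.univ.filter (fun i => v i ≠ 0)).sup (fun i : Fin n => (i : ℕ))

/-- `Y n k s t` is the set of nonzero vertices with coordinate sum `s`
whose last nonzero coordinate equals `t`. -/
def Y (n k : ℕ) (s t : ZMod k) : Set (Fin n → ZMod k) :=
  {v | v ≠ 0 ∧ ∑ i, v i = s ∧ ∃ i : Fin n, (i : ℕ) = ellN v ∧ v i = t}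

lemma le_ellN {n k : ℕ} (v : Fin n → ZMod k) (i : Fin n) (h : v i ≠ 0) :
    (i : ℕ) ≤ ellN v :=
  Finset.le_sup (by simp [h])

lemma ellN_zero {n k : ℕ} (v : Fin n → ZMod k) (i : Fin n) (h : ellN v < (i : ℕ)) :
    v i = 0 := by
  by_contra hc
  exact absurd (le_ellN v i hc) (Nat.not_le.mpr h)

theorem stmt12 (n k : ℕ) (hn : 1 ≤ n) (hk : 2 ≤ k) (s₁ s₂ t₁ t₂ : ZMod k)
    (ht₁ : t₁ ≠ 0) (ht₂ : t₂ ≠ 0) (ht : t₁ ≠ t₂)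
    (h1 : s₁ - s₂ ≠ t₁) (h2 : s₂ - s₁ ≠ t₂) (h3 : s₁ - s₂ ≠ t₁ - t₂) :
    ∀ v ∈ Y n k s₁ t₁, ∀ w ∈ Y n k s₂ t₂, ¬ HAdj v w := by
  rintro v ⟨hv0, hvs, iv, hiv, hivt⟩ w ⟨hw0, hws, iw, hiw, hiwt⟩ ⟨j, hj, hjuniq⟩
  have hag : ∀ i, i ≠ j → v i = w i := by
    intro i hi
    by_contra h
    exact hi (hjuniq i h)
  have hsum : s₁ - s₂ = v j - w j := by
    rw [← hvs, ← hws, ← Finset.sum_sub_distrib, Finset.sum_eq_single j]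
    · intro i _ hi
      rw [hag i hi, sub_self]
    · intro h
      exact absurd (Finset.mem_univ j) h
  by_cases hjv : j = iv <;> by_cases hjw : j = iw
  · -- j = iv = iw
    apply h3
    rw [hsum, hjv, hivt, ← hjv, hjw, hiwt]
  · -- j = iv, j ≠ iw
    have hwiw : w iw ≠ 0 := by rw [hiwt]; exact ht₂
    have hviw : v iw = w iw := hag iw (fun h => hjw h.symm)
    have h1' : (iw : ℕ) ≤ ellN v := le_ellN v iw (by rw [hviw]; exact hwiw)
    have h2' : (iw : ℕ) < (iv : ℕ) := by
      rcases lt_or_eq_of_le (hiv ▸ h1') with h | h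
      · exact h
      · exact absurd (Fin.ext h) (fun e => hjw (hjv.trans e.symm))
    have hwj : w j = 0 := ellN_zero w j (by rw [hjv, ← hiw]; exact h2')
    apply h1
    rw [hsum, hjv, hivt, ← hjv, hwj, sub_zero]
  · -- j ≠ iv, j = iw
    have hviv : v iv ≠ 0 := by rw [hivt]; exact ht₁
    have hwiv : w iv = v iv := (hag iv (fun h => hjv h.symm)).symm
    have h1' : (iv : ℕ) ≤ ellN w := le_ellN w iv (by rw [hwiv]; exact hviv)
    have h2' : (iv : ℕ) < (iw : ℕ) := by
      rcases lt_or_eq_of_le (hiw ▸ h1') with h | h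
      · exact h
      · exact absurd (Fin.ext h.symm) (fun e => hjv (hjw.trans e))
    have hvj : v j = 0 := ellN_zero v j (by rw [hjw, ← hiv]; exact h2')
    apply h2
    have : s₁ - s₂ = -t₂ := by rw [hsum, hjw, hiwt, ← hjw, hvj, zero_sub]
    linear_combination -this
  · -- j ≠ iv, j ≠ iw
    have hwiv : w iv = v iv := (hag iv (fun h => hjv h.symm)).symm
    have hviw : v iw = w iw := hag iw (fun h => hjw h.symm)
    have h1' : (iv : ℕ) ≤ ellN w := le_ellN w iv (by rw [hwiv, hivt]; exact ht₁)
    have h2' : (iw : ℕ) ≤ ellN v := le_ellN v iw (by rw [hviw, hiwt]; exact ht₂)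
    have : iv = iw := Fin.ext (by omega)
    exact ht (by rw [← hivt, this, hviw, hiwt])
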